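/- arXiv:2005.10973 — 5 statements merged into one kernel-verified Lean document; each statement's English description precedes it below -/
import Mathlib

section
/- For 0 < d < 1/2, the integral ∫_0^∞ ((1+x)^d − x^d)^2 dx is finite. -/
/-!
Near `0` the integrand is continuous, hence integrable on `(0, 1]`. On `(1, ∞)`, Bernoulli's
inequality for the concave power `t ↦ t ^ d` gives `(1 + x) ^ d - x ^ d ≤ d x ^ (d - 1)`, so the
integrand is at most `d² x ^ (2d - 2)`, which is integrable at infinity because `2d - 2 < -1`.
-/

open MeasureTheory Set Real

namespace Real

variable {d x : ℝ}

theorem continuous_sq_one_add_rpow_sub_rpow (hd : 0 ≤ d) :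
    Continuous fun x : ℝ => ((1 + x) ^ d - x ^ d) ^ 2 := by
  have hpow := continuous_rpow_const hd
  exact ((hpow.comp (continuous_const.add continuous_id)).sub hpow).pow 2

theorem rpow_le_one_add_rpow (hd : 0 ≤ d) (hx : 0 ≤ x) : x ^ d ≤ (1 + x) ^ d :=
  rpow_le_rpow hx (by linarith) hd

theorem one_add_rpow_sub_rpow_le (hd0 : 0 ≤ d) (hd1 : d ≤ 1) (hx : 0 < x) :
    (1 + x) ^ d - x ^ d ≤ d * x ^ (d - 1) := by
  have hfactor : (1 + x) ^ d = x ^ d * (1 + x⁻¹) ^ d := by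
    rw [← mul_rpow hx.le (by positivity), mul_add, mul_one, mul_inv_cancel₀ hx.ne', add_comm]
  have hbernoulli : (1 + x⁻¹) ^ d ≤ 1 + d * x⁻¹ :=
    rpow_one_add_le_one_add_mul_self (by linarith [inv_nonneg.2 hx.le]) hd0 hd1
  calc (1 + x) ^ d - x ^ d = x ^ d * ((1 + x⁻¹) ^ d - 1) := by rw [hfactor]; ring
    _ ≤ x ^ d * (d * x⁻¹) := by gcongr; linarith
    _ = d * x ^ (d - 1) := by rw [rpow_sub_one hx.ne']; ring

theorem sq_one_add_rpow_sub_rpow_le (hd0 : 0 ≤ d) (hd1 : d ≤ 1) (hx : 0 < x) :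
    ((1 + x) ^ d - x ^ d) ^ 2 ≤ d ^ 2 * x ^ (2 * d - 2) := by
  calc ((1 + x) ^ d - x ^ d) ^ 2 ≤ (d * x ^ (d - 1)) ^ 2 :=
        pow_le_pow_left₀ (sub_nonneg.2 (rpow_le_one_add_rpow hd0 hx.le))
          (one_add_rpow_sub_rpow_le hd0 hd1 hx) 2
    _ = d ^ 2 * x ^ (2 * d - 2) := by
        rw [mul_pow, ← rpow_mul_natCast hx.le]; ring_nf

theorem integrableOn_Ioi_one_sq_one_add_rpow_sub_rpow (hd0 : 0 ≤ d) (hd : d < 1 / 2) :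
    IntegrableOn (fun x : ℝ => ((1 + x) ^ d - x ^ d) ^ 2) (Ioi 1) := by
  have hmajorant : IntegrableOn (fun x : ℝ => d ^ 2 * x ^ (2 * d - 2)) (Ioi 1) :=
    (integrableOn_Ioi_rpow_of_lt (by linarith) one_pos).const_mul _
  refine hmajorant.mono' (continuous_sq_one_add_rpow_sub_rpow hd0).aestronglyMeasurable ?_
  filter_upwards [ae_restrict_mem measurableSet_Ioi] with x (hx : 1 < x)
  rw [norm_of_nonneg (sq_nonneg _)]
  exact sq_one_add_rpow_sub_rpow_le hd0 (by linarith) (by linarith)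

end Real

/-- For `0 < d < 1/2`, the integral `∫_0^∞ ((1+x)^d − x^d)^2 dx` is finite. -/
theorem integrable_sq_diff_rpow (d : ℝ) (hd0 : 0 < d) (hd : d < 1 / 2) :
    MeasureTheory.IntegrableOn (fun x : ℝ => ((1 + x) ^ d - x ^ d) ^ 2) (Set.Ioi 0) := by
  rw [← Ioc_union_Ioi_eq_Ioi zero_le_one]
  exact (continuous_sq_one_add_rpow_sub_rpow hd0.le).integrableOn_Ioc.union
    (integrableOn_Ioi_one_sq_one_add_rpow_sub_rpow hd0.le hd)
end

section
/- Let 0 < d < 1/2. Then n^{−(2d+1)} · ∑_{j=1}^{∞} ((n+j)^d − (j+1)^d)^2 → ∫_0^∞ ((1+x)^d − x^d)^2 dx as n → ∞. -/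
/-!
On `[j/n, (j+1)/n)` take the step function equal to `n^(-2d)` times the `j`-th summand; its
integral over `(0, ∞)` is the rescaled sum. With `u = (⌊n x⌋ + 1)/n ≥ x` the step function is
`((1+u)^d - (u+1/n)^d)^2`, which tends to `((1+x)^d - x^d)^2` and, as `t ↦ (1+t)^d - t^d` is
decreasing, is dominated by it. The dominating function is bounded near `0` and `O(x^(2d-2))` at
infinity, hence integrable for `d < 1/2`, and dominated convergence concludes.
-/

open Filter MeasureTheory Set Topology

section

variable {E : Type*} [NormedAddCommGroup E] [NormedSpace ℝ E] [CompleteSpace E]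

theorem integral_Ioi_natFloor (f : ℕ → E) (hf : IntegrableOn (fun x : ℝ => f ⌊x⌋₊) (Ioi 0)) :
    ∫ x in Ioi (0 : ℝ), f ⌊x⌋₊ = ∑' j, f j := by
  have hcover : ⋃ j : ℕ, Ico (j : ℝ) (j + 1) = Ici 0 := by
    simpa using iUnion_Ico_map_succ_eq_Ici (f := ((↑) : ℕ → ℝ)) (by simp)
      (not_bddAbove_iff.2 fun x => by simpa using exists_nat_gt x)
  have hcell (j : ℕ) : ∫ x in Ico (j : ℝ) (j + 1), f ⌊x⌋₊ = f j := by
    rw [setIntegral_congr_fun measurableSet_Ico fun x hx => by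
      rw [Nat.floor_eq_on_Ico j x hx], setIntegral_const]
    simp
  rw [← integral_Ici_eq_integral_Ioi, ← hcover, integral_iUnion (fun _ => measurableSet_Ico)
    (by simpa using Nat.mono_cast.pairwise_disjoint_on_Ico_succ) ?_]
  · exact tsum_congr hcell
  · rw [hcover]; exact (integrableOn_Ici_iff_integrableOn_Ioi).2 hf

theorem integral_Ioi_natFloor_mul (f : ℕ → E) {c : ℝ} (hc : 0 < c)
    (hf : IntegrableOn (fun x : ℝ => f ⌊c * x⌋₊) (Ioi 0)) :
    ∫ x in Ioi (0 : ℝ), f ⌊c * x⌋₊ = c⁻¹ • ∑' j, f j := by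
  rw [integral_comp_mul_left_Ioi (fun x => f ⌊x⌋₊) 0 hc, mul_zero, integral_Ioi_natFloor]
  simpa using (integrableOn_Ioi_comp_mul_left_iff (fun x => f ⌊x⌋₊) 0 hc).1 hf

end

theorem tendsto_natFloor_mul_add_one_div {x : ℝ} (hx : 0 ≤ x) :
    Tendsto (fun n : ℕ => ((⌊n * x⌋₊ : ℝ) + 1) / n) atTop (𝓝 x) := by
  have hfloor := (tendsto_nat_floor_mul_div_atTop hx).comp tendsto_natCast_atTop_atTop
  simpa [add_div, mul_comm x] using hfloor.add tendsto_one_div_atTop_nhds_zero_nat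

theorem le_natFloor_mul_add_one_div {n : ℕ} (hn : 0 < n) (x : ℝ) :
    x ≤ ((⌊n * x⌋₊ : ℝ) + 1) / n := by
  rw [le_div_iff₀ (by positivity), mul_comm]
  exact (Nat.lt_floor_add_one _).le

section

variable {d : ℝ}

theorem antitoneOn_one_add_rpow_sub_rpow (hd0 : 0 ≤ d) (hd1 : d ≤ 1) :
    AntitoneOn (fun x : ℝ => (1 + x) ^ d - x ^ d) (Ici 0) := by
  have hderiv {x : ℝ} (hx : 0 < x) : HasDerivAt (fun y : ℝ => (1 + y) ^ d - y ^ d)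
      (1 * d * (1 + x) ^ (d - 1) - d * x ^ (d - 1)) x :=
    (((hasDerivAt_id x).const_add 1).rpow_const (Or.inl (by positivity))).sub
      (Real.hasDerivAt_rpow_const (Or.inl hx.ne'))
  refine antitoneOn_of_deriv_nonpos (convex_Ici 0) (by fun_prop (disch := assumption))
    (fun x hx => ?_) fun x hx => ?_ <;> rw [interior_Ici] at hx
  · exact (hderiv hx).differentiableAt.differentiableWithinAt
  · rw [(hderiv hx).deriv, one_mul, ← mul_sub]
    exact mul_nonpos_of_nonneg_of_nonpos hd0 <| sub_nonpos.2 <|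
      Real.rpow_le_rpow_of_nonpos hx (by linarith) (by linarith)

theorem one_add_rpow_sub_rpow_le (hd0 : 0 ≤ d) (hd1 : d ≤ 1) {x : ℝ} (hx : 0 < x) :
    (1 + x) ^ d - x ^ d ≤ d * x ^ (d - 1) := by
  have hbern : (1 + x⁻¹) ^ d ≤ 1 + d * x⁻¹ :=
    rpow_one_add_le_one_add_mul_self (by linarith [inv_pos.2 hx]) hd0 hd1
  calc (1 + x) ^ d - x ^ d = x ^ d * ((1 + x⁻¹) ^ d - 1) := by
        rw [mul_sub, mul_one, ← Real.mul_rpow hx.le (by positivity), mul_add,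
          mul_inv_cancel₀ hx.ne', mul_one, add_comm x]
    _ ≤ x ^ d * (d * x⁻¹) := by gcongr; linarith
    _ = d * x ^ (d - 1) := by rw [Real.rpow_sub_one hx.ne']; ring

theorem integrableOn_Ioi_sq_one_add_rpow_sub_rpow (hd0 : 0 ≤ d) (hd : d < 1 / 2) :
    IntegrableOn (fun x : ℝ => ((1 + x) ^ d - x ^ d) ^ 2) (Ioi 0) := by
  have hcont : Continuous fun x : ℝ => ((1 + x) ^ d - x ^ d) ^ 2 := by
    fun_prop (disch := assumption)
  rw [← Ioc_union_Ioi_eq_Ioi zero_le_one]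
  refine (hcont.integrableOn_Icc.mono_set Ioc_subset_Icc_self).union ?_
  have hdom : IntegrableOn (fun x : ℝ => d ^ 2 * x ^ (2 * d - 2)) (Ioi 1) :=
    (integrableOn_Ioi_rpow_of_lt (by linarith) one_pos).const_mul _
  refine hdom.integrable.mono' hcont.aestronglyMeasurable ?_
  filter_upwards [ae_restrict_mem measurableSet_Ioi] with x (hx : 1 < x)
  have hx0 : 0 < x := one_pos.trans hx
  rw [Real.norm_eq_abs, abs_sq]
  calc ((1 + x) ^ d - x ^ d) ^ 2 ≤ (d * x ^ (d - 1)) ^ 2 := by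
        gcongr
        · exact sub_nonneg.2 (Real.rpow_le_rpow hx0.le (by linarith) hd0)
        · exact one_add_rpow_sub_rpow_le hd0 (by linarith) hx0
    _ = d ^ 2 * x ^ (2 * d - 2) := by
        rw [mul_pow, ← Real.rpow_mul_natCast hx0.le]; ring_nf

theorem rpow_neg_two_mul_mul_sq_rpow_sub_rpow {c : ℝ} (hc : 0 < c) {a b : ℝ} (ha : 0 ≤ a)
    (hb : 0 ≤ b) : c ^ (-(2 * d)) * (a ^ d - b ^ d) ^ 2 = ((a / c) ^ d - (b / c) ^ d) ^ 2 := by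
  rw [Real.div_rpow ha hc.le, Real.div_rpow hb hc.le, ← sub_div, div_pow, div_eq_inv_mul,
    ← Real.rpow_natCast (c ^ d), ← Real.rpow_mul hc.le, ← Real.rpow_neg hc.le]
  ring_nf

theorem sq_one_add_rpow_sub_add_rpow_le (hd0 : 0 ≤ d) (hd1 : d ≤ 1) {x u h : ℝ} (hx : 0 ≤ x)
    (hxu : x ≤ u) (h0 : 0 ≤ h) (h1 : h ≤ 1) :
    ((1 + u) ^ d - (u + h) ^ d) ^ 2 ≤ ((1 + x) ^ d - x ^ d) ^ 2 := by
  have hu : 0 ≤ u := hx.trans hxu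
  gcongr ?_ ^ 2
  · exact sub_nonneg.2 (Real.rpow_le_rpow (by linarith) (by linarith) hd0)
  calc (1 + u) ^ d - (u + h) ^ d ≤ (1 + u) ^ d - u ^ d := by
        gcongr (1 + u) ^ d - ?_
        exact Real.rpow_le_rpow hu (by linarith) hd0
    _ ≤ (1 + x) ^ d - x ^ d := antitoneOn_one_add_rpow_sub_rpow hd0 hd1 hx hu hxu

end

noncomputable def tailTerm (d : ℝ) (n j : ℕ) : ℝ :=
  (((n : ℝ) + ((j : ℝ) + 1)) ^ d - (((j : ℝ) + 1) + 1) ^ d) ^ 2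

noncomputable def tailStep (d : ℝ) (n : ℕ) (x : ℝ) : ℝ :=
  (n : ℝ) ^ (-(2 * d)) * tailTerm d n ⌊n * x⌋₊

theorem measurable_tailStep (d : ℝ) (n : ℕ) : Measurable (tailStep d n) := by
  unfold tailStep tailTerm
  fun_prop

theorem tailStep_nonneg (d : ℝ) (n : ℕ) (x : ℝ) : 0 ≤ tailStep d n x := by
  unfold tailStep tailTerm
  positivity

section

variable {d : ℝ}

theorem tailStep_eq {n : ℕ} (hn : 0 < n) (x : ℝ) :
    tailStep d n x = ((1 + (⌊n * x⌋₊ + 1) / n) ^ d - ((⌊n * x⌋₊ + 1) / n + 1 / n) ^ d) ^ 2 := by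
  have hn' : (0 : ℝ) < n := Nat.cast_pos.2 hn
  rw [tailStep, tailTerm, rpow_neg_two_mul_mul_sq_rpow_sub_rpow hn' (by positivity) (by positivity)]
  congr 4 <;> field_simp

theorem tailStep_le (hd0 : 0 ≤ d) (hd1 : d ≤ 1) {n : ℕ} (hn : 0 < n) {x : ℝ} (hx : 0 ≤ x) :
    tailStep d n x ≤ ((1 + x) ^ d - x ^ d) ^ 2 := by
  rw [tailStep_eq hn]
  exact sq_one_add_rpow_sub_add_rpow_le hd0 hd1 hx (le_natFloor_mul_add_one_div hn x)
    (by positivity) (div_le_one_of_le₀ (Nat.one_le_cast.2 hn) (Nat.cast_nonneg n))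

theorem tendsto_tailStep {x : ℝ} (hx : 0 < x) :
    Tendsto (fun n : ℕ => tailStep d n x) atTop (𝓝 (((1 + x) ^ d - x ^ d) ^ 2)) := by
  have hu := tendsto_natFloor_mul_add_one_div hx.le
  have hv : Tendsto (fun n : ℕ => ((⌊n * x⌋₊ : ℝ) + 1) / n + 1 / n) atTop (𝓝 x) := by
    simpa using hu.add tendsto_one_div_atTop_nhds_zero_nat
  have hlim := ((((tendsto_const_nhds (x := (1 : ℝ))).add hu).rpow_const (p := d)
    (Or.inl (by positivity))).sub (hv.rpow_const (p := d) (Or.inl hx.ne'))).pow 2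
  refine hlim.congr' ?_
  filter_upwards [eventually_gt_atTop 0] with n hn
  exact (tailStep_eq hn x).symm

theorem integral_tailStep {n : ℕ} (hn : 0 < n) (hint : IntegrableOn (tailStep d n) (Ioi 0)) :
    ∫ x in Ioi (0 : ℝ), tailStep d n x = (n : ℝ) ^ (-(2 * d + 1)) * ∑' j, tailTerm d n j := by
  have hn' : (0 : ℝ) < n := Nat.cast_pos.2 hn
  unfold tailStep at hint ⊢
  rw [integral_Ioi_natFloor_mul (fun j => (n : ℝ) ^ (-(2 * d)) * tailTerm d n j) hn' hint,
    tsum_mul_left, smul_eq_mul, ← mul_assoc, neg_add, Real.rpow_add hn', Real.rpow_neg_one, mul_comm ((n : ℝ)⁻¹)]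

end

/-- For `0 < d < 1/2`,
`n^{−(2d+1)} ∑_{j=1}^∞ ((n+j)^d − (j+1)^d)^2 → ∫_0^∞ ((1+x)^d − x^d)^2 dx`. -/
theorem tail_sum_to_integral (d : ℝ) (hd0 : 0 < d) (hd : d < 1 / 2) :
    Tendsto
      (fun n : ℕ => (n : ℝ) ^ (-(2 * d + 1)) *
        ∑' j : ℕ, (((n : ℝ) + ((j : ℝ) + 1)) ^ d - (((j : ℝ) + 1) + 1) ^ d) ^ 2)
      atTop (nhds (∫ x in Set.Ioi (0 : ℝ), ((1 + x) ^ d - x ^ d) ^ 2)) := by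
  have hg := integrableOn_Ioi_sq_one_add_rpow_sub_rpow hd0.le hd
  have hbound (n : ℕ) (hn : 0 < n) :
      ∀ᵐ x ∂volume.restrict (Ioi 0), ‖tailStep d n x‖ ≤ ((1 + x) ^ d - x ^ d) ^ 2 := by
    filter_upwards [ae_restrict_mem measurableSet_Ioi] with x hx
    rw [Real.norm_of_nonneg (tailStep_nonneg d n x)]
    exact tailStep_le hd0.le (by linarith) hn (le_of_lt hx)
  have hlim := tendsto_integral_filter_of_dominated_convergence _
    (.of_forall fun n => (measurable_tailStep d n).aestronglyMeasurable)
    ((eventually_gt_atTop 0).mono hbound) hg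
    (by filter_upwards [ae_restrict_mem measurableSet_Ioi] with x hx using tendsto_tailStep hx)
  refine hlim.congr' ?_
  filter_upwards [eventually_gt_atTop 0] with n hn
  exact integral_tailStep hn
    (hg.integrable.mono' (measurable_tailStep d n).aestronglyMeasurable (hbound n hn))
end

section
/- Let (a_i)_{i≥0} be an absolutely summable real sequence. Then ∑_{j=1}^{∞} (∑_{t=1}^{n} a_{t+j})^2 = o(n) as n → ∞. -/
/-!
With `A = ∑ |aᵢ|`, every inner sum has absolute value at most `∑_{t=1}^n |a_{t+j}| ≤ A`, so its square
is at most `A · ∑_{t=1}^n |a_{t+j}|`. Summing over `j` and exchanging the sums bounds the series by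
`A · ∑_{t=1}^n r_t`, where the tails `r_t = ∑_{j≥1} |a_{t+j}|` tend to `0`; hence so do their Cesàro means.
-/

open Filter Topology Finset

theorem Filter.Tendsto.cesaro_Icc {u : ℕ → ℝ} {l : ℝ} (h : Tendsto u atTop (𝓝 l)) :
    Tendsto (fun n : ℕ => (n⁻¹ : ℝ) * ∑ i ∈ Icc 1 n, u i) atTop (𝓝 l) := by
  refine (h.comp (tendsto_add_atTop_nat 1)).cesaro.congr fun n => ?_
  rw [range_eq_Ico, Function.comp_def, sum_Ico_add', zero_add, Ico_add_one_right_eq_Icc]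

theorem tendsto_tsum_abs_shift_atTop (a : ℕ → ℝ) :
    Tendsto (fun t => ∑' j, |a (t + j)|) atTop (𝓝 0) := by
  simpa only [add_comm] using tendsto_sum_nat_add fun i => |a i|

section AbsSummable

variable {a : ℕ → ℝ} (ha : Summable fun i => |a i|)
include ha

theorem sum_abs_shift_le_tsum_abs (s : Finset ℕ) (j : ℕ) :
    ∑ t ∈ s, |a (t + j)| ≤ ∑' i, |a i| :=
  (((summable_nat_add_iff j).2 ha).sum_le_tsum s fun _ _ => abs_nonneg _).trans <|
    tsum_comp_le_tsum_of_inj ha (fun _ => abs_nonneg _) (add_left_injective j)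

theorem sq_sum_shift_le (s : Finset ℕ) (j : ℕ) :
    (∑ t ∈ s, a (t + j)) ^ 2 ≤ (∑' i, |a i|) * ∑ t ∈ s, |a (t + j)| := by
  have habs : |∑ t ∈ s, a (t + j)| ≤ ∑ t ∈ s, |a (t + j)| := abs_sum_le_sum_abs _ _
  calc (∑ t ∈ s, a (t + j)) ^ 2 = |∑ t ∈ s, a (t + j)| ^ 2 := (sq_abs _).symm
    _ ≤ (∑ t ∈ s, |a (t + j)|) * ∑ t ∈ s, |a (t + j)| := by
      rw [sq]; exact mul_self_le_mul_self (abs_nonneg _) habs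
    _ ≤ (∑' i, |a i|) * ∑ t ∈ s, |a (t + j)| := by
      gcongr
      exact sum_abs_shift_le_tsum_abs ha s j

theorem summable_abs_shift (t : ℕ) : Summable fun j => |a (t + j)| := by
  simpa only [add_comm] using (summable_nat_add_iff t).2 ha

theorem tsum_sq_sum_shift_le (s : Finset ℕ) :
    ∑' j, (∑ t ∈ s, a (t + j)) ^ 2 ≤ (∑' i, |a i|) * ∑ t ∈ s, ∑' j, |a (t + j)| := by
  have hdom : Summable fun j => (∑' i, |a i|) * ∑ t ∈ s, |a (t + j)| :=
    (summable_sum fun t _ => summable_abs_shift ha t).mul_left _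
  calc ∑' j, (∑ t ∈ s, a (t + j)) ^ 2
      ≤ ∑' j, (∑' i, |a i|) * ∑ t ∈ s, |a (t + j)| :=
        (hdom.of_nonneg_of_le (fun _ => sq_nonneg _) (sq_sum_shift_le ha s)).tsum_le_tsum
          (sq_sum_shift_le ha s) hdom
    _ = (∑' i, |a i|) * ∑ t ∈ s, ∑' j, |a (t + j)| := by
      rw [tsum_mul_left, Summable.tsum_finsetSum fun t _ => summable_abs_shift ha t]

end AbsSummable

/-- For an absolutely summable sequence `a`,
`∑_{j=1}^∞ (∑_{t=1}^n a_{t+j})^2 = o(n)` as `n → ∞`. -/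
theorem tail_square_sum_little_o (a : ℕ → ℝ) (hsum : Summable fun i => |a i|) :
    Tendsto
      (fun n : ℕ => (1 / (n : ℝ)) * ∑' j : ℕ, (∑ t ∈ Finset.Icc 1 n, a (t + (j + 1))) ^ 2)
      atTop (nhds 0) := by
  set b : ℕ → ℝ := fun i => a (i + 1)
  have hb : Summable fun i => |b i| := (summable_nat_add_iff 1).2 hsum
  have hbound : ∀ n : ℕ,
      (1 / (n : ℝ)) * ∑' j : ℕ, (∑ t ∈ Icc 1 n, a (t + (j + 1))) ^ 2 ≤
        (∑' i, |b i|) * ((n : ℝ)⁻¹ * ∑ t ∈ Icc 1 n, ∑' j, |b (t + j)|) := fun n => by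
    rw [one_div, mul_left_comm]
    gcongr
    simpa only [b, ← add_assoc] using tsum_sq_sum_shift_le hb (Icc 1 n)
  have hnonneg : ∀ n : ℕ,
      0 ≤ (1 / (n : ℝ)) * ∑' j : ℕ, (∑ t ∈ Icc 1 n, a (t + (j + 1))) ^ 2 := fun n =>
    mul_nonneg (by positivity) (tsum_nonneg fun _ => sq_nonneg _)
  refine squeeze_zero hnonneg hbound ?_
  simpa using ((tendsto_tsum_abs_shift_atTop b).cesaro_Icc).const_mul (∑' i, |b i|)
end

section
/- For the function k(d) defined by k(d) = (1/(1+3d) + ∫_0^∞ ((1+x)^d − x^d)^3 dx)/(1/(1+2d) + ∫_0^∞ ((1+x)^d − x^d)^2 dx)^{3/2}, the limit as d → 1/2 (from below) is 0. -/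
/-!
Write `Δ_d(x) = (1 + x)^d - x^d`. By Bernoulli's inequality `d (1 + x)^(d-1) ≤ Δ_d(x) ≤ d x^(d-1)`,
and `Δ_d ≤ 1` by subadditivity of `t ↦ t^d`. The upper bounds make `∫ Δ_d^3` bounded near
`d = 1/2`, while the lower bound gives `∫ Δ_d^2 ≥ d^2 / (4 (1 - 2d)) → ∞`; hence `k(d) → 0`.
-/

open Real Set MeasureTheory Filter Topology

noncomputable def powIncrement (d x : ℝ) : ℝ := (1 + x) ^ d - x ^ d

section Pointwise

variable {d x : ℝ}

theorem powIncrement_nonneg (hx : 0 ≤ x) (hd : 0 ≤ d) : 0 ≤ powIncrement d x :=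
  sub_nonneg.2 (rpow_le_rpow hx (by linarith) hd)

theorem powIncrement_le_one (hx : 0 ≤ x) (hd0 : 0 ≤ d) (hd1 : d ≤ 1) : powIncrement d x ≤ 1 := by
  have := rpow_add_le_add_rpow zero_le_one hx hd0 hd1
  rw [one_rpow] at this
  unfold powIncrement
  linarith

theorem powIncrement_le (hx : 0 < x) (hd0 : 0 ≤ d) (hd1 : d ≤ 1) :
    powIncrement d x ≤ d * x ^ (d - 1) := by
  have hsplit : (1 + x) ^ d = x ^ d * (1 + x⁻¹) ^ d := by
    rw [← mul_rpow hx.le (by positivity), mul_add, mul_inv_cancel₀ hx.ne', mul_one, add_comm]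
  have hbern := rpow_one_add_le_one_add_mul_self (by linarith [inv_pos.2 hx]) hd0 hd1 (s := x⁻¹)
  calc powIncrement d x = x ^ d * (1 + x⁻¹) ^ d - x ^ d := by rw [powIncrement, hsplit]
    _ ≤ x ^ d * (1 + d * x⁻¹) - x ^ d := by gcongr
    _ = d * x ^ (d - 1) := by rw [rpow_sub_one hx.ne']; ring

theorem mul_rpow_le_powIncrement (hx : 0 ≤ x) (hd0 : 0 ≤ d) (hd1 : d ≤ 1) :
    d * (1 + x) ^ (d - 1) ≤ powIncrement d x := by
  have hx1 : 0 < 1 + x := by linarith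
  have hinv : (1 + x)⁻¹ ≤ 1 := inv_le_one_of_one_le₀ (by linarith)
  have hsplit : x ^ d = (1 + x) ^ d * (1 + -(1 + x)⁻¹) ^ d := by
    rw [← mul_rpow hx1.le (by linarith), mul_add, mul_neg, mul_inv_cancel₀ hx1.ne']
    ring_nf
  have hbern := rpow_one_add_le_one_add_mul_self (s := -(1 + x)⁻¹) (by linarith) hd0 hd1
  calc d * (1 + x) ^ (d - 1) = (1 + x) ^ d - (1 + x) ^ d * (1 + d * -(1 + x)⁻¹) := by
        rw [rpow_sub_one hx1.ne']; ring
    _ ≤ (1 + x) ^ d - (1 + x) ^ d * (1 + -(1 + x)⁻¹) ^ d := by gcongr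
    _ = powIncrement d x := by rw [powIncrement, ← hsplit]

theorem powIncrement_pow_le (hx : 0 < x) (hd0 : 0 ≤ d) (hd1 : d ≤ 1) (n : ℕ) :
    powIncrement d x ^ n ≤ x ^ ((d - 1) * n) := by
  rw [rpow_mul_natCast hx.le]
  gcongr
  · exact powIncrement_nonneg hx.le hd0
  · calc powIncrement d x ≤ d * x ^ (d - 1) := powIncrement_le hx hd0 hd1
      _ ≤ x ^ (d - 1) := mul_le_of_le_one_left (by positivity) hd1

theorem half_mul_rpow_le_powIncrement (hx : 1 ≤ x) (hd0 : 0 ≤ d) (hd1 : d ≤ 1) :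
    d / 2 * x ^ (d - 1) ≤ powIncrement d x := by
  have htwo : (2 : ℝ)⁻¹ ≤ 2 ^ (d - 1) := by
    rw [← rpow_neg_one]; exact rpow_le_rpow_of_exponent_le one_le_two (by linarith)
  calc d / 2 * x ^ (d - 1) ≤ d * ((2 : ℝ) ^ (d - 1) * x ^ (d - 1)) := by
        rw [div_eq_mul_inv, mul_assoc]; gcongr
    _ = d * (2 * x) ^ (d - 1) := by rw [mul_rpow zero_le_two (by linarith)]
    _ ≤ d * (1 + x) ^ (d - 1) := by
        gcongr ?_ * ?_
        exact rpow_le_rpow_of_nonpos (by linarith) (by linarith) (by linarith)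
    _ ≤ powIncrement d x := mul_rpow_le_powIncrement (by linarith) hd0 hd1

end Pointwise

section Integral

variable {d : ℝ}

theorem integrableOn_powIncrement_pow {n : ℕ} (hd : 0 ≤ d) (hn : 1 < n * (1 - d)) :
    IntegrableOn (fun x => powIncrement d x ^ n) (Ioi 0) := by
  have hd1 : d ≤ 1 := by by_contra! h; nlinarith [(Nat.cast_nonneg n : (0 : ℝ) ≤ n)]
  have hmeas : AEStronglyMeasurable (fun x => powIncrement d x ^ n) := by
    unfold powIncrement; fun_prop
  rw [← Ioc_union_Ioi_eq_Ioi zero_le_one]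
  refine IntegrableOn.union ?_ ?_
  · refine Measure.integrableOn_of_bounded (M := 1) measure_Ioc_lt_top.ne hmeas ?_
    filter_upwards [ae_restrict_mem measurableSet_Ioc] with x hx
    rw [norm_of_nonneg (pow_nonneg (powIncrement_nonneg hx.1.le hd) n)]
    exact pow_le_one₀ (powIncrement_nonneg hx.1.le hd) (powIncrement_le_one hx.1.le hd hd1)
  · refine (integrableOn_Ioi_rpow_of_lt (a := (d - 1) * n) (by linarith) one_pos).mono'
      hmeas.restrict ?_
    filter_upwards [ae_restrict_mem measurableSet_Ioi] with x hx
    have hx0 : 0 < x := one_pos.trans hx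
    rw [norm_of_nonneg (pow_nonneg (powIncrement_nonneg hx0.le hd) n)]
    exact powIncrement_pow_le hx0 hd hd1 n

theorem integral_powIncrement_pow_le {n : ℕ} (hd : 0 ≤ d) (hn : 1 < n * (1 - d)) :
    ∫ x in Ioi 0, powIncrement d x ^ n ≤ 1 + (n * (1 - d) - 1)⁻¹ := by
  have hd1 : d ≤ 1 := by by_contra! h; nlinarith [(Nat.cast_nonneg n : (0 : ℝ) ≤ n)]
  have hint := integrableOn_powIncrement_pow hd hn
  rw [← Ioc_union_Ioi_eq_Ioi zero_le_one] at hint ⊢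
  rw [setIntegral_union Ioc_disjoint_Ioi_same measurableSet_Ioi
    (hint.mono_set subset_union_left) (hint.mono_set subset_union_right)]
  gcongr
  · calc ∫ x in Ioc 0 1, powIncrement d x ^ n ≤ ∫ _ in Ioc (0 : ℝ) 1, (1 : ℝ) := by
          refine setIntegral_mono_on (hint.mono_set subset_union_left)
            (integrableOn_const measure_Ioc_lt_top.ne) measurableSet_Ioc fun x hx => ?_
          exact pow_le_one₀ (powIncrement_nonneg hx.1.le hd) (powIncrement_le_one hx.1.le hd hd1)
      _ = 1 := by simp
  · have hs : (d - 1) * n < -1 := by linarith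
    calc ∫ x in Ioi 1, powIncrement d x ^ n ≤ ∫ x in Ioi 1, x ^ ((d - 1) * n) :=
          setIntegral_mono_on (hint.mono_set subset_union_right)
            (integrableOn_Ioi_rpow_of_lt hs one_pos) measurableSet_Ioi
            fun x hx => powIncrement_pow_le (one_pos.trans hx) hd hd1 n
      _ = (n * (1 - d) - 1)⁻¹ := by
          rw [integral_Ioi_rpow_of_lt hs one_pos, one_rpow, neg_div, ← div_neg, one_div]
          ring_nf

theorem le_integral_powIncrement_sq (hd0 : 0 ≤ d) (hd : d < 1 / 2) :
    d ^ 2 / 4 * (1 - 2 * d)⁻¹ ≤ ∫ x in Ioi 0, powIncrement d x ^ 2 := by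
  have hs : 2 * d - 2 < -1 := by linarith
  have hint := integrableOn_powIncrement_pow (n := 2) hd0 (by push_cast; linarith)
  calc d ^ 2 / 4 * (1 - 2 * d)⁻¹ = ∫ x in Ioi 1, d ^ 2 / 4 * x ^ (2 * d - 2) := by
        rw [integral_const_mul, integral_Ioi_rpow_of_lt hs one_pos, one_rpow, neg_div, ← div_neg,
          one_div]
        ring_nf
    _ ≤ ∫ x in Ioi 1, powIncrement d x ^ 2 := by
        refine setIntegral_mono_on ((integrableOn_Ioi_rpow_of_lt hs one_pos).const_mul _)
          (hint.mono_set (Ioi_subset_Ioi zero_le_one)) measurableSet_Ioi fun x hx => ?_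
        have hx0 : 0 < x := one_pos.trans hx
        calc d ^ 2 / 4 * x ^ (2 * d - 2) = (d / 2 * x ^ (d - 1)) ^ 2 := by
              rw [mul_pow, ← rpow_mul_natCast hx0.le]; ring_nf
          _ ≤ powIncrement d x ^ 2 := by
              gcongr
              exact half_mul_rpow_le_powIncrement hx.le hd0 (by linarith)
    _ ≤ ∫ x in Ioi 0, powIncrement d x ^ 2 := by
        refine setIntegral_mono_set hint ?_ (Ioi_subset_Ioi zero_le_one).eventuallyLE
        filter_upwards [ae_restrict_mem measurableSet_Ioi] with x hx
        exact pow_nonneg (powIncrement_nonneg (le_of_lt hx) hd0) 2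

theorem integral_powIncrement_cube_le_three (hd0 : 0 ≤ d) (hd : d ≤ 1 / 2) :
    ∫ x in Ioi 0, powIncrement d x ^ 3 ≤ 3 := by
  have hn : 1 / 2 ≤ (3 : ℕ) * (1 - d) - 1 := by push_cast; linarith
  calc ∫ x in Ioi 0, powIncrement d x ^ 3 ≤ 1 + ((3 : ℕ) * (1 - d) - 1)⁻¹ :=
        integral_powIncrement_pow_le hd0 (by push_cast at hn ⊢; linarith)
    _ ≤ 1 + (1 / 2)⁻¹ := by gcongr
    _ = 3 := by norm_num

end Integral

theorem tendsto_integral_powIncrement_sq_atTop :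
    Tendsto (fun d => ∫ x in Ioi 0, powIncrement d x ^ 2) (𝓝[<] (1 / 2)) atTop := by
  have hgap : Tendsto (fun d : ℝ => 1 - 2 * d) (𝓝[<] (1 / 2)) (𝓝[>] 0) := by
    refine tendsto_nhdsWithin_of_tendsto_nhds_of_eventually_within _ ?_ ?_
    · have : Tendsto (fun d : ℝ => 1 - 2 * d) (𝓝 (1 / 2)) (𝓝 (1 - 2 * (1 / 2))) :=
        (continuous_const.sub (continuous_const.mul continuous_id)).tendsto _
      simpa using this.mono_left nhdsWithin_le_nhds
    · filter_upwards [self_mem_nhdsWithin] with d (hd : d < 1 / 2)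
      simp only [mem_Ioi, sub_pos]
      linarith
  have hsq : Tendsto (fun d : ℝ => d ^ 2 / 4) (𝓝[<] (1 / 2)) (𝓝 ((1 / 2) ^ 2 / 4)) :=
    ((continuous_pow 2).div_const 4).tendsto _ |>.mono_left nhdsWithin_le_nhds
  refine tendsto_atTop_mono' _ ?_
    (hsq.pos_mul_atTop (by norm_num) (tendsto_inv_nhdsGT_zero.comp hgap))
  filter_upwards [Ioo_mem_nhdsLT (show (0 : ℝ) < 1 / 2 by norm_num)] with d hd
  exact le_integral_powIncrement_sq hd.1.le hd.2

/-- The function `k(d)` tends to `0` as `d → 1/2` from below. -/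
theorem k_tendsto_zero_at_half :
    Tendsto
      (fun d : ℝ =>
        (1 / (1 + 3 * d) + ∫ x in Set.Ioi (0 : ℝ), ((1 + x) ^ d - x ^ d) ^ 3) /
          (1 / (1 + 2 * d) + ∫ x in Set.Ioi (0 : ℝ), ((1 + x) ^ d - x ^ d) ^ 2) ^ ((3 : ℝ) / 2))
      (nhdsWithin (1 / 2) (Set.Iio (1 / 2))) (nhds 0) := by
  have hnear : Ioo 0 (1 / 2) ∈ 𝓝[<] (1 / 2 : ℝ) := Ioo_mem_nhdsLT (by norm_num)
  have hden : Tendsto (fun d : ℝ => 1 / (1 + 2 * d) + ∫ x in Ioi 0, powIncrement d x ^ 2)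
      (𝓝[<] (1 / 2)) atTop := by
    refine tendsto_atTop_add_left_of_le' _ 0 ?_ tendsto_integral_powIncrement_sq_atTop
    filter_upwards [hnear] with d ⟨hd0, _⟩
    positivity
  have hden_rpow := (tendsto_rpow_atTop (by norm_num : (0 : ℝ) < 3 / 2)).comp hden
  refine tendsto_of_tendsto_of_tendsto_of_le_of_le' tendsto_const_nhds
    ((tendsto_const_nhds (x := (4 : ℝ))).div_atTop hden_rpow)
    ?_ ?_ <;> filter_upwards [hnear] with d ⟨hd0, hd⟩
  · have hI : 0 ≤ ∫ x in Ioi 0, powIncrement d x ^ 3 :=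
      setIntegral_nonneg measurableSet_Ioi fun x (hx : 0 < x) =>
        pow_nonneg (powIncrement_nonneg hx.le hd0.le) 3
    exact div_nonneg (add_nonneg (by positivity) hI) (rpow_nonneg (by positivity) _)
  · have hnum : 1 / (1 + 3 * d) + ∫ x in Ioi 0, powIncrement d x ^ 3 ≤ 4 := by
      have : 1 / (1 + 3 * d) ≤ 1 := by rw [div_le_one (by positivity)]; linarith
      linarith [integral_powIncrement_cube_le_three hd0.le hd.le]
    exact div_le_div_of_nonneg_right hnum (rpow_nonneg (by positivity) _)
end

section
/- Let 0 ≤ d < 1/2. The series ∑_{i=0}^∞ a_i^2 a_{i+h}, summed over h from 1 to q, satisfies q^{−d} ∑_{h=1}^{q} ∑_{i=0}^∞ a_i^2 a_{i+h} → (c/d)·c_1(d) for some finite constant c_1(d) as q → ∞, when a_i ~ c·i^{d−1} with c > 0 and a_i ≥ 0 nonincreasing; in particular the normalized sum q^{−d} ∑_{h=1}^{q} ∑_{i=0}^∞ a_i^2 a_{i+h} is bounded in q. -/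
/-!
Write `A = ∑ aᵢ²`, which is finite because `aᵢ² ≍ i^{2d-2}` and `d < 1/2`. Since `a` is
nonincreasing, `aᵢ² a_{i+h} ≤ aᵢ² a_h`, so dominated convergence gives
`∑ᵢ aᵢ² a_{i+h} ~ c A h^{d-1}`. Summing over `h`, a Stolz–Cesàro argument transfers this
to the partial sums, and `∑_{h ≤ q} h^{d-1} ~ q^d / d` by comparison with `∫₁^q x^{d-1} dx`.
Hence the limit holds with `c₁ = A`.
-/

open Filter Finset Asymptotics Topology

theorem tendsto_sum_range_div_sum_range {f g : ℕ → ℝ} {L : ℝ} (hg : ∀ n, 0 < g n)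
    (hg_sum : Tendsto (fun n ↦ ∑ i ∈ range n, g i) atTop atTop)
    (hfg : Tendsto (fun n ↦ f n / g n) atTop (𝓝 L)) :
    Tendsto (fun n ↦ (∑ i ∈ range n, f i) / ∑ i ∈ range n, g i) atTop (𝓝 L) := by
  have hsmall : (fun n ↦ f n - L * g n) =o[atTop] g := by
    refine (isLittleO_iff_tendsto fun n hn ↦ absurd hn (hg n).ne').2 ?_
    simpa [sub_div, mul_div_cancel_right₀ _ (hg _).ne'] using hfg.sub_const L
  have hsum := (hsmall.sum_range (fun n ↦ (hg n).le) hg_sum).tendsto_div_nhds_zero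
  refine (zero_add L ▸ hsum.add_const L).congr' ?_
  filter_upwards [hg_sum.eventually_gt_atTop 0] with n hn
  rw [sum_sub_distrib, ← mul_sum]
  field_simp
  ring

theorem tendsto_add_rpow_div_rpow {x : ℝ} (hx : 0 ≤ x) (p : ℝ) :
    Tendsto (fun n : ℕ ↦ ((n : ℝ) + x) ^ p / (n : ℝ) ^ p) atTop (𝓝 1) := by
  have hlim : Tendsto (fun n : ℕ ↦ (1 + x * (n : ℝ)⁻¹) ^ p) atTop (𝓝 1) := by
    have := ((tendsto_inv_atTop_zero.comp tendsto_natCast_atTop_atTop).const_mul x).const_add 1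
    simpa using this.rpow_const (p := p) (Or.inl (by norm_num))
  refine hlim.congr' ?_
  filter_upwards [eventually_gt_atTop 0] with n hn
  have hn' : (0 : ℝ) < n := by exact_mod_cast hn
  rw [← Real.div_rpow (by positivity) hn'.le]
  congr 1
  field_simp

theorem sum_range_add_one_rpow_ge {d : ℝ} (hd0 : 0 < d) (hd1 : d ≤ 1) (q : ℕ) :
    (((q : ℝ) + 1) ^ d - 1) / d ≤ ∑ h ∈ range q, ((h : ℝ) + 1) ^ (d - 1) := by
  have hanti : AntitoneOn (fun x : ℝ ↦ x ^ (d - 1)) (Set.Icc 1 (1 + q)) :=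
    fun x hx y _ hxy ↦ Real.rpow_le_rpow_of_nonpos (by linarith [hx.1]) hxy (by linarith)
  have h := hanti.integral_le_sum
  rw [integral_rpow (Or.inl (by linarith))] at h
  simpa [add_comm] using h

theorem sum_range_add_one_rpow_le {d : ℝ} (hd0 : 0 < d) (hd1 : d ≤ 1) (q : ℕ) :
    ∑ h ∈ range q, ((h : ℝ) + 1) ^ (d - 1) ≤ 1 + (((q : ℝ) + 1) ^ d - 1) / d := by
  have hanti : AntitoneOn (fun x : ℝ ↦ x ^ (d - 1)) (Set.Icc 1 (1 + q)) :=
    fun x hx y _ hxy ↦ Real.rpow_le_rpow_of_nonpos (by linarith [hx.1]) hxy (by linarith)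
  have h := hanti.sum_le_integral
  rw [integral_rpow (Or.inl (by linarith))] at h
  calc ∑ h ∈ range q, ((h : ℝ) + 1) ^ (d - 1)
      ≤ ∑ h ∈ range (q + 1), ((h : ℝ) + 1) ^ (d - 1) :=
        sum_le_sum_of_subset_of_nonneg (range_subset_range.2 q.le_succ)
          fun _ _ _ ↦ by positivity
    _ = 1 + ∑ h ∈ range q, (1 + ((h + 1 : ℕ) : ℝ)) ^ (d - 1) := by
        rw [sum_range_succ', add_comm, Nat.cast_zero, zero_add, Real.one_rpow]
        push_cast; ring_nf
    _ ≤ 1 + (((q : ℝ) + 1) ^ d - 1) / d := by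
        simpa [add_comm] using h

theorem tendsto_sum_range_add_one_rpow_div_rpow {d : ℝ} (hd0 : 0 < d) (hd1 : d ≤ 1) :
    Tendsto (fun q : ℕ ↦ (∑ h ∈ range q, ((h : ℝ) + 1) ^ (d - 1)) / (q : ℝ) ^ d)
      atTop (𝓝 (1 / d)) := by
  have hratio := tendsto_add_rpow_div_rpow zero_le_one d
  have hinv : Tendsto (fun q : ℕ ↦ ((q : ℝ) ^ d)⁻¹) atTop (𝓝 0) :=
    ((tendsto_rpow_atTop hd0).comp tendsto_natCast_atTop_atTop).inv_tendsto_atTop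
  have hlower := (hratio.div_const d).sub (hinv.const_mul (1 / d))
  have hupper := (hratio.div_const d).add (hinv.const_mul (1 - 1 / d))
  simp only [mul_zero, sub_zero, add_zero] at hlower hupper
  refine tendsto_of_tendsto_of_tendsto_of_le_of_le hlower hupper (fun q ↦ ?_) (fun q ↦ ?_)
  · calc _ = (((q : ℝ) + 1) ^ d - 1) / d / (q : ℝ) ^ d := by ring
      _ ≤ _ := by gcongr; exact sum_range_add_one_rpow_ge hd0 hd1 q
  · calc _ ≤ (1 + (((q : ℝ) + 1) ^ d - 1) / d) / (q : ℝ) ^ d := by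
          gcongr; exact sum_range_add_one_rpow_le hd0 hd1 q
      _ = _ := by ring

theorem tendsto_sum_range_add_one_rpow_atTop {d : ℝ} (hd0 : 0 < d) (hd1 : d ≤ 1) :
    Tendsto (fun q : ℕ ↦ ∑ h ∈ range q, ((h : ℝ) + 1) ^ (d - 1)) atTop atTop := by
  have hpow := (tendsto_rpow_atTop hd0).comp tendsto_natCast_atTop_atTop
  refine (Tendsto.pos_mul_atTop (one_div_pos.2 hd0)
    (tendsto_sum_range_add_one_rpow_div_rpow hd0 hd1) hpow).congr' ?_
  filter_upwards [eventually_gt_atTop 0] with q hq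
  have : (q : ℝ) ^ d ≠ 0 := by positivity
  simp only [Function.comp_apply]
  field_simp

theorem summable_sq_of_isBigO_rpow {a : ℕ → ℝ} {p : ℝ} (hp : p < -1 / 2)
    (ha : a =O[atTop] fun n : ℕ ↦ (n : ℝ) ^ p) : Summable fun n ↦ a n ^ 2 := by
  have hsq : (fun n ↦ a n ^ 2) =O[atTop] fun n : ℕ ↦ (n : ℝ) ^ (p * 2) := by
    refine (ha.pow 2).congr_right fun n ↦ ?_
    rw [← Real.rpow_mul_natCast (Nat.cast_nonneg _)]
    norm_num
  exact summable_of_isBigO_nat (Real.summable_nat_rpow.2 (by linarith)) hsq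

theorem tendsto_tsum_mul_shift_div_rpow {a b : ℕ → ℝ} {p L : ℝ}
    (ha_nonneg : ∀ n, 0 ≤ a n) (ha_anti : Antitone a) (hb : Summable b)
    (ha : Tendsto (fun n : ℕ ↦ a n / (n : ℝ) ^ p) atTop (𝓝 L)) :
    Tendsto (fun h : ℕ ↦ (∑' i, b i * a (i + h)) / (h : ℝ) ^ p) atTop
      (𝓝 ((∑' i, b i) * L)) := by
  simp_rw [← tsum_div_const, ← tsum_mul_right]
  refine tendsto_tsum_of_dominated_convergence (bound := fun i ↦ |b i| * (L + 1))
    (hb.abs.mul_right _) (fun i ↦ ?_) ?_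
  · have hshift : Tendsto (fun h : ℕ ↦ a (i + h) / ((h : ℝ) + i) ^ p) atTop (𝓝 L) :=
      (ha.comp (tendsto_add_atTop_nat i)).congr fun h ↦ by simp [add_comm]
    have := (hshift.mul (tendsto_add_rpow_div_rpow (Nat.cast_nonneg i) p)).const_mul (b i)
    rw [mul_one] at this
    refine this.congr' ?_
    filter_upwards [eventually_gt_atTop 0] with h hh
    have : ((h : ℝ) + i) ^ p ≠ 0 := by positivity
    field_simp
  · filter_upwards [ha.eventually_lt_const (lt_add_one L), eventually_gt_atTop 0] with h hlt hh i
    have hpos : (0 : ℝ) < (h : ℝ) ^ p := by positivity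
    rw [norm_div, norm_mul, Real.norm_eq_abs, Real.norm_of_nonneg (ha_nonneg _),
      Real.norm_of_nonneg hpos.le, mul_div_assoc]
    gcongr
    calc a (i + h) / (h : ℝ) ^ p ≤ a h / (h : ℝ) ^ p := by
          gcongr; exact ha_anti (Nat.le_add_left h i)
      _ ≤ L + 1 := hlt.le

theorem sum_Icc_one_eq_sum_range_succ {M : Type*} [AddCommMonoid M] (f : ℕ → M) (q : ℕ) :
    ∑ h ∈ Icc 1 q, f h = ∑ h ∈ range q, f (h + 1) := by
  rw [range_eq_Ico, sum_Ico_add', ← Ico_add_one_right_eq_Icc]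

/-- For `0 < d < 1/2`, `a_i ~ c i^{d-1}` with `c > 0`, `a` nonnegative and nonincreasing,
the normalized sums `q^{-d} ∑_{h=1}^q ∑_i a_i^2 a_{i+h}` converge to `(c/d)·c₁(d)` for some
finite constant `c₁(d)`, and in particular are bounded in `q`. -/
theorem normalized_third_cov_sum_limit (d c : ℝ) (hd0 : 0 < d) (hd : d < 1 / 2) (hc : 0 < c)
    (a : ℕ → ℝ) (hanonneg : ∀ i, 0 ≤ a i) (hamono : ∀ i j, i ≤ j → a j ≤ a i)
    (ha : Tendsto (fun i : ℕ => a i / (c * (i : ℝ) ^ (d - 1))) atTop (nhds 1)) :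
    (∃ c₁ : ℝ, Tendsto
        (fun q : ℕ => (q : ℝ) ^ (-d) * ∑ h ∈ Finset.Icc 1 q, ∑' i : ℕ, (a i) ^ 2 * a (i + h))
        atTop (nhds (c / d * c₁)))
    ∧ ∃ M : ℝ, ∀ q : ℕ,
        (q : ℝ) ^ (-d) * ∑ h ∈ Finset.Icc 1 q, ∑' i : ℕ, (a i) ^ 2 * a (i + h) ≤ M := by
  have hd1 : d ≤ 1 := by linarith
  set F : ℕ → ℝ := fun h ↦ ∑' i : ℕ, a i ^ 2 * a (i + h)
  have hac : Tendsto (fun i : ℕ ↦ a i / (i : ℝ) ^ (d - 1)) atTop (𝓝 c) := by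
    simpa [← mul_div_assoc, mul_div_mul_left _ _ hc.ne'] using ha.const_mul c
  have hsq : Summable fun i ↦ a i ^ 2 := summable_sq_of_isBigO_rpow (by linarith) <|
    isBigO_of_div_tendsto_nhds ((eventually_gt_atTop 0).mono fun i hi h0 ↦
      absurd h0 (by positivity)) c hac
  have hF : Tendsto (fun h : ℕ ↦ F (h + 1) / ((h : ℝ) + 1) ^ (d - 1)) atTop
      (𝓝 ((∑' i, a i ^ 2) * c)) := by
    refine ((tendsto_tsum_mul_shift_div_rpow hanonneg (fun i j ↦ hamono i j) hsq hac).comp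
      (tendsto_add_atTop_nat 1)).congr fun h ↦ ?_
    simp [F]
  have hlim := (tendsto_sum_range_div_sum_range (fun h ↦ by positivity)
    (tendsto_sum_range_add_one_rpow_atTop hd0 hd1) hF).mul
    (tendsto_sum_range_add_one_rpow_div_rpow hd0 hd1)
  have main : Tendsto (fun q : ℕ ↦ (q : ℝ) ^ (-d) * ∑ h ∈ Icc 1 q, F h) atTop
      (𝓝 (c / d * ∑' i, a i ^ 2)) := by
    convert hlim.congr' ?_ using 2
    · ring
    filter_upwards [eventually_gt_atTop 0] with q hq
    have : ∑ h ∈ range q, ((h : ℝ) + 1) ^ (d - 1) ≠ 0 :=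
      (sum_pos (fun h _ ↦ by positivity) (nonempty_range_iff.2 hq.ne')).ne'
    rw [sum_Icc_one_eq_sum_range_succ, Real.rpow_neg (Nat.cast_nonneg q)]
    field_simp
  obtain ⟨M, hM⟩ := main.bddAbove_range
  exact ⟨⟨_, main⟩, M, fun q ↦ hM ⟨q, rfl⟩⟩
end
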